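/- arXiv:cs/0008018 — 4 statements merged into one kernel-verified Lean document; each statement's English description precedes it below -/
import Mathlib

section
/- Let S be a deterministic boolean series over a structured alphabet (W,∼), let T be any boolean series over W, and let u ∈ W*. If the left-quotient S•u is nonempty (not the zero series), then (S·T)•u = (S•u)·T. -/
/-- Left-quotient (residual) of a boolean series (language) by a word. -/
def lq {W : Type*} (S : Language W) (u : List W) : Language W := {w | u ++ w ∈ S}

/-- `S` is left-deterministic over the structured alphabet `(W, r)`. -/
def LeftDet {W : Type*} (r : W → W → Prop) (S : Language W) : Prop :=
  S = 0 ∨ S = 1 ∨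
  (∀ w w', w ∈ S → w' ∈ S →
    ∃ (a a' : W) (t t' : List W), w = a :: t ∧ w' = a' :: t' ∧ r a a')

/-- `S` is deterministic iff every left-quotient of `S` is left-deterministic. -/
def Det {W : Type*} (r : W → W → Prop) (S : Language W) : Prop :=
  ∀ u : List W, LeftDet r (lq S u)

/-- If `S` is a deterministic series over a structured alphabet `(W, r)` and the
left-quotient `S • u` is nonempty, then `(S · T) • u = (S • u) · T`. -/
theorem lq_mul_of_det {W : Type*} (r : W → W → Prop) (hr : Equivalence r)
    (S T : Language W) (u : List W)
    (hS : Det r S) (hne : lq S u ≠ 0) :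
    lq (S * T) u = lq S u * T := by
  ext w
  simp only [lq, Language.mem_mul, Set.mem_setOf_eq]
  constructor
  · rintro ⟨s, hs, t, ht, hst⟩
    rcases le_or_gt u.length s.length with h | h
    · have hpre : u <+: s :=
        List.prefix_of_prefix_length_le ⟨w, hst.symm⟩ (List.prefix_append s t) h
      obtain ⟨s', rfl⟩ := hpre
      refine ⟨s', hs, t, ht, ?_⟩
      have := hst
      rw [List.append_assoc] at this
      exact List.append_cancel_left this
    · -- s is a proper prefix of u; derive contradiction from determinism
      exfalso
      have hpre : s <+: u :=
        List.prefix_of_prefix_length_le (List.prefix_append s t) ⟨w, hst.symm⟩ h.le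
      obtain ⟨v, rfl⟩ := hpre
      have hv : v ≠ [] := by
        intro hv; rw [hv, List.append_nil] at h; exact lt_irrefl _ h
      set u := s ++ v with hu
      obtain ⟨x, hx⟩ : ∃ x, x ∈ lq S u := by
        rcases Set.eq_empty_or_nonempty (lq S u) with he | hn
        · exact absurd he hne
        · exact hn
      have hε : ([] : List W) ∈ lq S s := by
        show s ++ [] ∈ S; simpa using hs
      have hvx : v ++ x ∈ lq S s := by
        show s ++ (v ++ x) ∈ S
        rw [← List.append_assoc]; exact hx
      rcases hS s with h0 | h1 | hd
      · rw [h0] at hε; exact hε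
      · rw [h1] at hvx
        have : v ++ x = [] := hvx
        exact hv (List.append_eq_nil_iff.mp this).1
      · obtain ⟨a, a', t', t'', ha, _⟩ := hd [] [] hε hε
        exact List.cons_ne_nil _ _ ha.symm
  · rintro ⟨s, hs, t, ht, rfl⟩
    exact ⟨u ++ s, hs, t, ht, by rw [List.append_assoc]⟩
end

section
/- For a deterministic series S, a series T over a structured alphabet W, and a word u ∈ W*, exactly one of the following holds: (1) S•u ≠ ∅, and then (S·T)•u = (S•u)·T; (2) S•u = ∅ and there is a factorization u = u'u'' with S•u' = {ε}, and then (S·T)•u = T•u''; (3) S•u = ∅ and S•u' ≠ {ε} for every prefix u' of u, and then (S·T)•u = ∅. -/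
lemma mem_lq {W : Type*} {S : Language W} {u w : List W} :
    w ∈ lq S u ↔ u ++ w ∈ S := Iff.rfl

lemma mem_zero_iff {W : Type*} {w : List W} : w ∈ (0 : Language W) ↔ False := Iff.rfl

/-- If `S` is deterministic and `u ∈ S` then `lq S u = 1`. -/
lemma lq_eq_one {W : Type*} {r : W → W → Prop} {S : Language W}
    (hS : Det r S) {u : List W} (h : u ∈ S) : lq S u = 1 := by
  have he : [] ∈ lq S u := by simpa [mem_lq] using h
  rcases hS u with h0 | h1 | h2
  · rw [h0] at he; exact absurd he (by simp)
  · exact h1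
  · obtain ⟨a, a', t, t', h1, _, _⟩ := h2 [] [] he he
    cases h1

/-- Trichotomy for residuals of a product `S · T` with `S` deterministic:
(1) `S•u ≠ ∅` and `(S·T)•u = (S•u)·T`; or
(2) `S•u = ∅`, `u = u'u''` with `S•u' = {ε}` and `(S·T)•u = T•u''`; or
(3) `S•u = ∅`, no prefix `u'` of `u` has `S•u' = {ε}`, and `(S·T)•u = ∅`.
The three cases are mutually exclusive and one of them holds. -/
theorem lq_mul_trichotomy {W : Type*} (r : W → W → Prop) (hr : Equivalence r)
    (S T : Language W) (u : List W) (hS : Det r S) :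
    (lq S u ≠ 0 ∧ lq (S * T) u = lq S u * T) ∨
    (lq S u = 0 ∧ (∃ u' u'' : List W, u = u' ++ u'' ∧ lq S u' = 1 ∧
        lq (S * T) u = lq T u'')) ∨
    (lq S u = 0 ∧ (∀ u' : List W, u' <+: u → lq S u' ≠ 1) ∧
        lq (S * T) u = (0 : Language W)) := by
  by_cases h0 : lq S u = 0
  · by_cases h1 : ∃ u' u'' : List W, u = u' ++ u'' ∧ lq S u' = 1
    · right; left
      refine ⟨h0, ?_⟩
      obtain ⟨u', u'', hu, hone⟩ := h1
      refine ⟨u', u'', hu, hone, ?_⟩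
      have hu'S : u' ∈ S := by
        have : [] ∈ lq S u' := by rw [hone]; simp [Language.mem_one]
        simpa [mem_lq] using this
      ext w
      simp only [mem_lq, Language.mem_mul]
      constructor
      · rintro ⟨s, hs, t, ht, hst⟩
        rcases List.append_eq_append_iff.mp hst with ⟨v, hv, hvt⟩ | ⟨c, hc, hw⟩
        · -- u = s ++ v, t = v ++ w : s is a prefix of u in S
          have hlqs : lq S s = 1 := lq_eq_one hS hs
          -- s and u' are both prefixes of u, show s = u'
          have hsu : s = u' := by
            rcases List.prefix_or_prefix_of_prefix (⟨v, hv.symm⟩ : s <+: u)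
                (⟨u'', hu.symm⟩ : u' <+: u) with ⟨c, hc⟩ | ⟨c, hc⟩
            · -- u' = s ++ c, u' ∈ S so c ∈ lq S s = 1
              have : c ∈ lq S s := by rw [mem_lq, hc]; exact hu'S
              rw [hlqs] at this
              simp [Language.mem_one] at this
              simp [← hc, this]
            · have : c ∈ lq S u' := by rw [mem_lq, hc]; exact hs
              rw [hone] at this
              simp [Language.mem_one] at this
              simp [← hc, this]
          subst hsu
          have hvu : v = u'' := by
            have := hv.symm.trans hu
            exact List.append_cancel_left this
          rw [hvu] at hvt
          rw [hvt] at ht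
          exact ht
        · -- s = u ++ c : c ∈ lq S u = 0, contradiction
          exfalso
          have : c ∈ lq S u := by rw [mem_lq, ← hc]; exact hs
          rw [h0] at this
          exact this
      · intro hw
        exact ⟨u', hu'S, u'' ++ w, hw, by rw [hu, List.append_assoc]⟩
    · right; right
      push_neg at h1
      refine ⟨h0, ?_, ?_⟩
      · intro u' hpre
        obtain ⟨u'', hu''⟩ := hpre
        exact h1 u' u'' hu''.symm
      · ext w
        simp only [mem_zero_iff, iff_false]
        intro hw
        rw [mem_lq, Language.mem_mul] at hw
        obtain ⟨s, hs, t, ht, hst⟩ := hw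
        rcases List.append_eq_append_iff.mp hst with ⟨v, hv, _⟩ | ⟨c, hc, _⟩
        · exact h1 s v hv (lq_eq_one hS hs)
        · have : c ∈ lq S u := by rw [mem_lq, ← hc]; exact hs
          rw [h0] at this
          exact this
  · left
    refine ⟨h0, ?_⟩
    ext w
    simp only [mem_lq, Language.mem_mul]
    constructor
    · rintro ⟨s, hs, t, ht, hst⟩
      rcases List.append_eq_append_iff.mp hst with ⟨v, hv, hvt⟩ | ⟨c, hc, hw⟩
      · -- u = s ++ v, so lq S s = 1 and lq S u = lq 1 v; nonempty forces v = []
        have hlqs : lq S s = 1 := lq_eq_one hS hs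
        have hv0 : v = [] := by
          by_contra hne
          apply h0
          ext x
          simp only [mem_zero_iff, iff_false]
          intro hx
          have : v ++ x ∈ lq S s := by rw [mem_lq, ← List.append_assoc, ← hv]; exact hx
          rw [hlqs] at this
          rw [Language.mem_one] at this
          exact hne (by cases v <;> simp_all)
        subst hv0
        simp only [List.append_nil] at hv
        subst hv
        simp only [List.nil_append] at hvt
        refine ⟨[], by simpa [mem_lq] using hs, w, hvt ▸ ht, by simp⟩
      · exact ⟨c, hc ▸ hs, t, ht, hw.symm⟩
    · rintro ⟨s, hs, t, ht, hst⟩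
      exact ⟨u ++ s, hs, t, ht, by rw [← hst, List.append_assoc]⟩
end

section
/- The product of deterministic matrices of boolean series is deterministic: if S is a deterministic (n,m)-matrix and T a deterministic (m,s)-matrix of boolean series over a structured alphabet W, then S·T is a deterministic (n,s)-matrix. -/
/-- Componentwise left-quotient of a row-vector of series. -/
def lqVec {W : Type*} {n : ℕ} (S : Fin n → Language W) (u : List W) :
    Fin n → Language W := fun j => lq (S j) u

/-- A row-vector of series is left-deterministic over the structured alphabet `(W, r)`:
it is the zero vector, or a unit vector, or all words occurring in any component
start with `r`-equivalent letters. -/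
def LeftDetVec {W : Type*} (r : W → W → Prop) {n : ℕ} (S : Fin n → Language W) : Prop :=
  (∀ j, S j = 0) ∨
  (∃ j0, S j0 = 1 ∧ ∀ j, j ≠ j0 → S j = 0) ∨
  (∀ j j' w w', w ∈ S j → w' ∈ S j' →
    ∃ (a a' : W) (t t' : List W), w = a :: t ∧ w' = a' :: t' ∧ r a a')

/-- A row-vector is deterministic iff all its componentwise left-quotients are
left-deterministic. -/
def DetVec {W : Type*} (r : W → W → Prop) {n : ℕ} (S : Fin n → Language W) : Prop :=
  ∀ u : List W, LeftDetVec r (lqVec S u)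

/-- A matrix of series is deterministic iff each of its rows is. -/
def DetMat {W : Type*} (r : W → W → Prop) {n m : ℕ}
    (M : Fin n → Fin m → Language W) : Prop :=
  ∀ i, DetVec r (M i)

/-- Matrix product of matrices of boolean series. -/
def matMul {W : Type*} {n m s : ℕ} (A : Fin n → Fin m → Language W)
    (B : Fin m → Fin s → Language W) : Fin n → Fin s → Language W :=
  fun i j => ∑ k, A i k * B k j

/-- Row-vector times matrix. -/
def vecMulMat {W : Type*} {m s : ℕ} (A : Fin m → Language W)
    (B : Fin m → Fin s → Language W) : Fin s → Language W :=
  fun j => ∑ k, A k * B k j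

/-- Set of row-residuals of a matrix of series. -/
def rowResiduals {W : Type*} {n m : ℕ} (M : Fin n → Fin m → Language W) :
    Set (Fin m → Language W) :=
  {T | ∃ (i : Fin n) (u : List W), T = lqVec (M i) u}

/-- The norm of a matrix: the (extended) number of its row-residuals. -/
noncomputable def normMat {W : Type*} {n m : ℕ} (M : Fin n → Fin m → Language W) : ℕ∞ :=
  (rowResiduals M).encard

/-- Set of residuals of a row-vector of series. -/
def residualsVec {W : Type*} {n : ℕ} (S : Fin n → Language W) :
    Set (Fin n → Language W) :=
  {T | ∃ u : List W, T = lqVec S u}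

/-- The norm of a row-vector: the (extended) number of its residuals. -/
noncomputable def normVec {W : Type*} {n : ℕ} (S : Fin n → Language W) : ℕ∞ :=
  (residualsVec S).encard

lemma mem_langSum {W ι : Type*} (t : Finset ι) (f : ι → Language W) (x : List W) :
    x ∈ ∑ k ∈ t, f k ↔ ∃ k ∈ t, x ∈ f k := by
  classical
  induction t using Finset.induction_on with
  | empty => simp
  | insert _ _ hnotmem ih =>
      rw [Finset.sum_insert hnotmem, Language.mem_add, ih]
      simp

lemma mem_lqVec {W : Type*} {n : ℕ} {S : Fin n → Language W} {u w : List W} {j : Fin n} :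
    w ∈ lqVec S u j ↔ u ++ w ∈ S j := Iff.rfl

lemma unit_of_mem {W : Type*} {r : W → W → Prop} {n : ℕ} {S : Fin n → Language W}
    (hS : DetVec r S) {v : List W} {k : Fin n} (hv : v ∈ S k) :
    lq (S k) v = 1 ∧ ∀ k', k' ≠ k → lq (S k') v = 0 := by
  have heps : ([] : List W) ∈ lqVec S v k := by
    rw [mem_lqVec, List.append_nil]; exact hv
  rcases hS v with h0 | ⟨j0, h1, h2⟩ | h3
  · exact absurd (h0 k ▸ heps) (by simp)
  · rcases eq_or_ne k j0 with rfl | hne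
    · exact ⟨h1, fun k' hk' => h2 k' hk'⟩
    · exact absurd (h2 k hne ▸ heps) (by simp)
  · obtain ⟨a, a', t, t', hcons, -, -⟩ := h3 k k [] [] heps heps
    exact absurd hcons (by simp)

lemma prefix_unique {W : Type*} {r : W → W → Prop} {n : ℕ} {S : Fin n → Language W}
    (hS : DetVec r S) {v a : List W} {k k' : Fin n} (hv : v ∈ S k) (ha : a ∈ S k')
    (hpre : a <+: v ∨ v <+: a) : a = v ∧ k' = k := by
  rcases hpre with ⟨y, rfl⟩ | ⟨y, rfl⟩
  · obtain ⟨h1, h0⟩ := unit_of_mem hS ha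
    have hy : y ∈ lq (S k) a := hv
    rcases eq_or_ne k k' with rfl | hne
    · rw [h1, Language.mem_one] at hy
      simp [hy]
    · rw [h0 k hne] at hy
      exact absurd hy (by simp)
  · obtain ⟨h1, h0⟩ := unit_of_mem hS hv
    have hy : y ∈ lq (S k') v := ha
    rcases eq_or_ne k' k with rfl | hne
    · rw [h1, Language.mem_one] at hy
      simp [hy]
    · rw [h0 k' hne] at hy
      exact absurd hy (by simp)

/-- The product of deterministic matrices of boolean series over a structured alphabet
is deterministic. -/
theorem detMat_mul {W : Type*} (r : W → W → Prop) (hr : Equivalence r)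
    {n m s : ℕ} (A : Fin n → Fin m → Language W) (B : Fin m → Fin s → Language W)
    (hA : DetMat r A) (hB : DetMat r B) :
    DetMat r (matMul A B) := by
  intro i u
  by_cases h : ∃ v k, v <+: u ∧ v ∈ A i k
  · -- some prefix of `u` is read entirely inside row `A i`
    obtain ⟨v, k, ⟨x, hvx⟩, hv⟩ := h
    obtain ⟨hk1, hk0⟩ := unit_of_mem (hA i) hv
    have key : lqVec (matMul A B i) u = lqVec (B k) x := by
      funext j
      ext w
      rw [mem_lqVec, mem_lqVec]
      show u ++ w ∈ ∑ k, A i k * B k j ↔ x ++ w ∈ B k j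
      rw [mem_langSum]
      constructor
      · rintro ⟨k', -, hk'⟩
        rw [Language.mem_mul] at hk'
        obtain ⟨a, ha, b, hb, hab⟩ := hk'
        have hauw : a <+: u ++ w := ⟨b, hab⟩
        rcases List.prefix_or_prefix_of_prefix hauw (List.prefix_append u w) with hau | hua
        · -- a is a prefix of u, so a = v and k' = k
          have hav : a <+: v ∨ v <+: a :=
            List.prefix_or_prefix_of_prefix hau ⟨x, hvx⟩
          obtain ⟨rfl, rfl⟩ := prefix_unique (hA i) hv ha hav
          have : a ++ b = a ++ (x ++ w) := by
            rw [hab, ← hvx, List.append_assoc]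
          have hb' := List.append_cancel_left this
          rwa [← hb']
        · -- u is a prefix of a : a = v ++ (x ++ y), forcing x ++ y = []
          obtain ⟨y, rfl⟩ := hua
          have hy : x ++ y ∈ lq (A i k') v := by
            show v ++ (x ++ y) ∈ A i k'
            rw [← List.append_assoc, hvx]; exact ha
          rcases eq_or_ne k' k with rfl | hne
          · rw [hk1, Language.mem_one, List.append_eq_nil_iff] at hy
            obtain ⟨rfl, rfl⟩ := hy
            have hab' : u ++ b = u ++ w := by simpa using hab
            have hb' := List.append_cancel_left hab'
            simpa [← hb'] using hb
          · rw [hk0 k' hne] at hy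
            exact absurd hy (by simp)
      · intro hw
        refine ⟨k, Finset.mem_univ k, Language.mem_mul.2 ⟨v, hv, x ++ w, hw, ?_⟩⟩
        rw [← List.append_assoc, hvx]
    rw [key]
    exact hB k x
  · -- no prefix of `u` lies in any component of row `A i`
    push_neg at h
    have extract : ∀ j w, w ∈ lqVec (matMul A B i) u j →
        ∃ (k : Fin m) (y b : List W), y ∈ lq (A i k) u ∧ y ≠ [] ∧ w = y ++ b := by
      intro j w hw
      rw [mem_lqVec] at hw
      have hw : u ++ w ∈ ∑ k, A i k * B k j := hw
      rw [mem_langSum] at hw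
      obtain ⟨k, -, hk⟩ := hw
      rw [Language.mem_mul] at hk
      obtain ⟨a, ha, b, hb, hab⟩ := hk
      have hnp : ¬ a <+: u := fun hp => h a k hp ha
      have hua : u <+: a :=
        (List.prefix_or_prefix_of_prefix ⟨b, hab⟩ (List.prefix_append u w)).resolve_left hnp
      obtain ⟨y, rfl⟩ := hua
      have hy : y ∈ lq (A i k) u := ha
      have hyne : y ≠ [] := by
        rintro rfl
        exact h u k (by simp) (by simpa using ha)
      have hw' : w = y ++ b := by
        have : u ++ (y ++ b) = u ++ w := by rw [← List.append_assoc, hab]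
        exact (List.append_cancel_left this).symm
      exact ⟨k, y, b, hy, hyne, hw'⟩
    right; right
    intro j j' w w' hw hw'
    obtain ⟨k, y, b, hy, hyne, rfl⟩ := extract j w hw
    obtain ⟨k', y', b', hy', hyne', rfl⟩ := extract j' w' hw'
    rcases hA i u with h0 | ⟨j0, h1, h2⟩ | h3
    · have hy' : y ∈ lqVec (A i) u k := hy
      rw [h0 k] at hy'
      exact absurd hy' (by simp)
    · have hmem : ([] : List W) ∈ lqVec (A i) u j0 := by rw [h1]; simp
      have : u ∈ A i j0 := by
        have h' : u ++ [] ∈ A i j0 := mem_lqVec.mp hmem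
        simpa using h'
      exact absurd this (h u j0 (by simp))
    · obtain ⟨a, a', t, t', rfl, rfl, har⟩ := h3 k k' y y' hy hy'
      exact ⟨a, a', t ++ b, t' ++ b', by simp, by simp, har⟩
end

section
/- If A is a deterministic (n,m)-matrix of boolean series and B is any (m,s)-matrix of boolean series over a structured alphabet W, then the norm of A·B is at most the norm of A plus the norm of B, i.e. ‖A·B‖ ≤ ‖A‖ + ‖B‖. -/
section Aux

variable {W : Type*}

lemma mem_lsum {ι : Type*} (t : Finset ι) (f : ι → Language W) (x : List W) :
    x ∈ ∑ k ∈ t, f k ↔ ∃ k ∈ t, x ∈ f k := by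
  classical
  induction t using Finset.induction_on with
  | empty => simp [Language.notMem_zero]
  | insert _ _ h ih =>
      rw [Finset.sum_insert h]
      simp [Language.mem_add, ih]

lemma lq_nil (S : Language W) : lq S [] = S := rfl

lemma lqVec_nil {n : ℕ} (S : Fin n → Language W) : lqVec S [] = S := rfl

lemma lq_append (S : Language W) (u v : List W) :
    lq (lq S u) v = lq S (u ++ v) := by
  ext w
  show u ++ (v ++ w) ∈ S ↔ (u ++ v) ++ w ∈ S
  rw [List.append_assoc]

lemma lq_zero (u : List W) : lq (0 : Language W) u = 0 :=
  Set.ext fun w => iff_of_false (fun h => Language.notMem_zero (u ++ w) h)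
    (Language.notMem_zero w)

lemma lqVec_append {n : ℕ} (S : Fin n → Language W) (u v : List W) :
    lqVec (lqVec S u) v = lqVec S (u ++ v) := by
  funext j; exact lq_append (S j) u v

lemma key (r : W → W → Prop) {m s : ℕ} (B : Fin m → Fin s → Language W) :
    ∀ (u : List W) (S : Fin m → Language W), DetVec r S →
      lqVec (vecMulMat S B) u = vecMulMat (lqVec S u) B ∨
      ∃ k v, lqVec (vecMulMat S B) u = lqVec (B k) v := by
  intro u
  induction u with
  | nil => intro S _; left; rw [lqVec_nil, lqVec_nil]
  | cons a u ih =>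
    intro S hS
    have hdet : LeftDetVec r S := by have := hS []; rwa [lqVec_nil] at this
    rcases hdet with h0 | ⟨k0, hk1, hk0⟩ | hl
    · -- zero vector
      left
      have hz : vecMulMat S B = 0 := by
        funext j
        show (∑ k, S k * B k j) = 0
        simp [h0]
      have hz' : lqVec S (a :: u) = 0 := by
        funext j
        show lq (S j) (a :: u) = 0
        rw [h0 j, lq_zero]
      have hz0 : vecMulMat (0 : Fin m → Language W) B = 0 := by
        funext j
        show (∑ k, (0 : Language W) * B k j) = 0
        simp
      rw [hz, hz', hz0]
      funext j
      show lq ((0 : Fin s → Language W) j) (a :: u) = 0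
      exact lq_zero _
    · -- unit vector
      right
      refine ⟨k0, a :: u, ?_⟩
      have hrow : vecMulMat S B = B k0 := by
        funext j
        have : ∑ k, S k * B k j = S k0 * B k0 j :=
          Finset.sum_eq_single k0
            (fun k _ hk => by rw [hk0 k hk, zero_mul])
            (fun h => absurd (Finset.mem_univ k0) h)
        show ∑ k, S k * B k j = B k0 j
        rw [this, hk1, one_mul]
      rw [hrow]
    · -- all words start with letters; in particular ε occurs nowhere
      have hne : ∀ k, [] ∉ S k := by
        intro k h
        rcases hl k k [] [] h h with ⟨a', _, t, _, he, _, _⟩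
        exact (List.cons_ne_nil a' t) he.symm
      have hstep : lqVec (vecMulMat S B) [a] = vecMulMat (lqVec S [a]) B := by
        funext j
        ext w
        simp only [lqVec, lq, vecMulMat, Set.mem_setOf_eq, mem_lsum, Language.mem_mul]
        constructor
        · rintro ⟨k, -, x, hx, y, hy, hxy⟩
          cases x with
          | nil => exact absurd hx (hne k)
          | cons b x' =>
            rw [List.cons_append] at hxy
            injection hxy with hb hw
            subst hb
            exact ⟨k, Finset.mem_univ k, x', hx, y, hy, hw⟩
        · rintro ⟨k, -, x, hx, y, hy, hxy⟩
          exact ⟨k, Finset.mem_univ k, a :: x, hx, y, hy, by simp [hxy]⟩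
      have heq : lqVec (vecMulMat S B) (a :: u) = lqVec (vecMulMat (lqVec S [a]) B) u := by
        rw [show (a :: u) = [a] ++ u from rfl, ← lqVec_append, hstep]
      have hdet' : DetVec r (lqVec S [a]) := by
        intro v
        rw [lqVec_append]
        exact hS _
      rcases ih (lqVec S [a]) hdet' with h | ⟨k, v, h⟩
      · left
        rw [heq, h, lqVec_append]
        rfl
      · right
        exact ⟨k, v, heq.trans h⟩

end Aux

/-- If `A` is a deterministic matrix of boolean series and `B` is any matrix of boolean
series over a structured alphabet, then `‖A · B‖ ≤ ‖A‖ + ‖B‖` (in `ℕ∞`). -/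
theorem normMat_mul_le {W : Type*} (r : W → W → Prop) (hr : Equivalence r)
    {n m s : ℕ} (A : Fin n → Fin m → Language W) (B : Fin m → Fin s → Language W)
    (hA : DetMat r A) :
    normMat (matMul A B) ≤ normMat A + normMat B := by
  have hsub : rowResiduals (matMul A B) ⊆
      ((fun T => vecMulMat T B) '' rowResiduals A) ∪ rowResiduals B := by
    rintro T ⟨i, u, rfl⟩
    have hrow : matMul A B i = vecMulMat (A i) B := rfl
    rcases key r B u (A i) (hA i) with h | ⟨k, v, h⟩
    · left
      exact ⟨lqVec (A i) u, ⟨i, u, rfl⟩, by rw [hrow, h]⟩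
    · right
      exact ⟨k, v, by rw [hrow, h]⟩
  calc (rowResiduals (matMul A B)).encard
      ≤ (((fun T => vecMulMat T B) '' rowResiduals A) ∪ rowResiduals B).encard :=
        Set.encard_mono hsub
    _ ≤ ((fun T => vecMulMat T B) '' rowResiduals A).encard + (rowResiduals B).encard :=
        Set.encard_union_le _ _
    _ ≤ (rowResiduals A).encard + (rowResiduals B).encard :=
        add_le_add (Set.encard_image_le _ _) le_rfl
end
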